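/- Let k ∈ {5, 6} and let T be a {K₃, P_k}-saturated tree that is not a star. If k = 5 then T contains a copy of the tree T₁ on 5 vertices of diameter 3 with degree sequence (3,2,1,1,1), namely the double star obtained from an edge by attaching one leaf to one end and two leaves to the other end; if k = 6 and diam(T) = 3 then T contains the double star with two leaves at each center (tree T₂), and if k = 6 and diam(T) = 4 then T contains the 6-vertex tree T₃ consisting of a path v₁v₂v₃v₄v₅ plus a leaf attached to v₃. -/

import Mathlib

set_option maxRecDepth 4000


open SimpleGraph

/-- Graph `G` contains a copy of `H`, i.e. a subgraph isomorphic to `H`. -/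
def Contains {α β : Type*} (G : SimpleGraph α) (H : SimpleGraph β) : Prop :=
  ∃ f : β ↪ α, ∀ a b, H.Adj a b → G.Adj (f a) (f b)

/-- `G` together with the extra edge `uv`. -/
def addE {α : Type*} (G : SimpleGraph α) (u v : α) : SimpleGraph α :=
  G ⊔ SimpleGraph.fromEdgeSet {s(u, v)}

/-- `G` is `H`-saturated: `G` is `H`-free and adding any non-edge creates a copy of `H`. -/
def Saturated {α β : Type*} (G : SimpleGraph α) (H : SimpleGraph β) : Prop :=
  ¬ Contains G H ∧ ∀ u v : α, u ≠ v → ¬ G.Adj u v → Contains (addE G u v) H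

/-- The join `K₁ ∨ F`: a new vertex (`none`) adjacent to every vertex of `F`. -/
def joinK1 {β : Type*} (F : SimpleGraph β) : SimpleGraph (Option β) where
  Adj x y :=
    match x, y with
    | some a, some b => F.Adj a b
    | some _, none => True
    | none, some _ => True
    | none, none => False
  symm := by
    constructor
    rintro (_ | a) (_ | b) h
    · exact h.elim
    · trivial
    · trivial
    · exact h.symm
  loopless := by
    constructor
    rintro (_ | a) h
    · exact h.elim
    · exact F.loopless.irrefl a h

/-- The saturation number `sat(n, H)`: minimum number of edges of an `H`-saturated
graph on `n` vertices. -/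
noncomputable def satNum {β : Type*} (n : ℕ) (H : SimpleGraph β) : ℕ :=
  sInf {e | ∃ G : SimpleGraph (Fin n), Saturated G H ∧ G.edgeSet.ncard = e}

/-- The triangle. -/
def K3 : SimpleGraph (Fin 3) := ⊤

/-- `G` is `{K₃, Pₖ}`-saturated. -/
def SatKP {V : Type*} (G : SimpleGraph V) (k : ℕ) : Prop :=
  ¬ Contains G K3 ∧ ¬ Contains G (SimpleGraph.pathGraph k) ∧
    ∀ u v : V, u ≠ v → ¬ G.Adj u v →
      Contains (addE G u v) K3 ∨ Contains (addE G u v) (SimpleGraph.pathGraph k)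

/-- The saturation number `sat(n, {K₃, Pₖ})`. -/
noncomputable def satKPNum (n k : ℕ) : ℕ :=
  sInf {e | ∃ G : SimpleGraph (Fin n), SatKP G k ∧ G.edgeSet.ncard = e}

/-- Disjoint union of two graphs. -/
def sumGraph {α β : Type*} (A : SimpleGraph α) (B : SimpleGraph β) :
    SimpleGraph (α ⊕ β) where
  Adj x y :=
    match x, y with
    | .inl a, .inl b => A.Adj a b
    | .inr a, .inr b => B.Adj a b
    | _, _ => False
  symm := by
    constructor
    rintro (a | a) (b | b) h
    · exact h.symm
    · exact h.elim
    · exact h.elim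
    · exact h.symm
  loopless := by
    constructor
    rintro (a | a) h
    · exact A.loopless.irrefl a h
    · exact B.loopless.irrefl a h

/-- Disjoint union of a family of graphs. -/
def sigmaGraph {ι : Type*} {V : ι → Type*} (G : ∀ i, SimpleGraph (V i)) :
    SimpleGraph (Σ i, V i) where
  Adj x y := ∃ (i : ι) (a b : V i), x = ⟨i, a⟩ ∧ y = ⟨i, b⟩ ∧ (G i).Adj a b
  symm := by
    constructor
    rintro x y ⟨i, a, b, rfl, rfl, h⟩
    exact ⟨i, b, a, rfl, rfl, h.symm⟩
  loopless := by
    constructor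
    rintro ⟨j, c⟩ ⟨i, a, b, h1, h2, h⟩
    rw [h1] at h2
    obtain ⟨rfl⟩ := h2
    exact (G i).loopless.irrefl a h

/-- `T₁`: the path `0-1-2-3` together with an extra leaf `4` attached at `1`. -/
def T1 : SimpleGraph (Fin 5) :=
  SimpleGraph.fromEdgeSet {s(0, 1), s(1, 2), s(2, 3), s(1, 4)}

/-- `T₂`: the double star with adjacent centers `0, 1`, leaves `2, 3` at `0`
and leaves `4, 5` at `1`. -/
def T2 : SimpleGraph (Fin 6) :=
  SimpleGraph.fromEdgeSet {s(0, 1), s(0, 2), s(0, 3), s(1, 4), s(1, 5)}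

/-- `T₃`: the path `0-1-2-3-4` together with an extra leaf `5` attached at `2`. -/
def T3 : SimpleGraph (Fin 6) :=
  SimpleGraph.fromEdgeSet {s(0, 1), s(1, 2), s(2, 3), s(3, 4), s(2, 5)}


section Helpers

open SimpleGraph

variable {V : Type*} {T : SimpleGraph V}

lemma addE_adj {u v x y : V} :
    (addE T u v).Adj x y ↔ T.Adj x y ∨ (s(x, y) = s(u, v) ∧ x ≠ y) := by
  simp [addE, Sym2.eq_iff]

lemma tree_walk_length (hT : T.IsTree) {x y : V} (p : T.Walk x y) (hp : p.IsPath) :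
    T.dist x y = p.length := by
  classical
  obtain ⟨w, hw⟩ := hT.isConnected.exists_walk_length_eq_dist x y
  have h1 : w.bypass.length ≤ T.dist x y := hw ▸ w.length_bypass_le
  have h2 : T.dist x y ≤ w.bypass.length := SimpleGraph.dist_le _
  have he : w.bypass = p := (hT.existsUnique_path x y).unique w.bypass_isPath hp
  rw [← he]
  omega

lemma tdist2 (hT : T.IsTree) {x0 x1 x2 : V} (h01 : T.Adj x0 x1) (h12 : T.Adj x1 x2)
    (n02 : x0 ≠ x2) : T.dist x0 x2 = 2 := by
  have := tree_walk_length hT (Walk.cons h01 (Walk.cons h12 Walk.nil)) ?_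
  · simpa using this
  · simp [Walk.isPath_def, h01.ne, h12.ne, n02]

lemma tnadj2 (hT : T.IsTree) {x0 x1 x2 : V} (h01 : T.Adj x0 x1) (h12 : T.Adj x1 x2)
    (n02 : x0 ≠ x2) : ¬ T.Adj x0 x2 := by
  intro h
  have h1 : T.dist x0 x2 = 1 := SimpleGraph.dist_eq_one_iff_adj.mpr h
  have h2 := tdist2 hT h01 h12 n02
  omega

lemma tne03 (hT : T.IsTree) {x0 x1 x2 x3 : V} (h01 : T.Adj x0 x1) (h12 : T.Adj x1 x2)
    (h23 : T.Adj x2 x3) (n02 : x0 ≠ x2) (n13 : x1 ≠ x3) : x0 ≠ x3 := by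
  rintro rfl
  exact tnadj2 hT h01 h12 n02 h23.symm

lemma tdist3 (hT : T.IsTree) {x0 x1 x2 x3 : V} (h01 : T.Adj x0 x1) (h12 : T.Adj x1 x2)
    (h23 : T.Adj x2 x3) (n02 : x0 ≠ x2) (n13 : x1 ≠ x3) : T.dist x0 x3 = 3 := by
  have n03 := tne03 hT h01 h12 h23 n02 n13
  have := tree_walk_length hT (Walk.cons h01 (Walk.cons h12 (Walk.cons h23 Walk.nil))) ?_
  · simpa using this
  · simp [Walk.isPath_def, h01.ne, h12.ne, h23.ne, n02, n13, n03]

lemma tnadj3 (hT : T.IsTree) {x0 x1 x2 x3 : V} (h01 : T.Adj x0 x1) (h12 : T.Adj x1 x2)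
    (h23 : T.Adj x2 x3) (n02 : x0 ≠ x2) (n13 : x1 ≠ x3) : ¬ T.Adj x0 x3 := by
  intro h
  have h1 : T.dist x0 x3 = 1 := SimpleGraph.dist_eq_one_iff_adj.mpr h
  have h2 := tdist3 hT h01 h12 h23 n02 n13
  omega

lemma tne04 (hT : T.IsTree) {x0 x1 x2 x3 x4 : V} (h01 : T.Adj x0 x1) (h12 : T.Adj x1 x2)
    (h23 : T.Adj x2 x3) (h34 : T.Adj x3 x4) (n02 : x0 ≠ x2) (n13 : x1 ≠ x3)
    (n24 : x2 ≠ x4) : x0 ≠ x4 := by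
  rintro rfl
  exact tnadj3 hT h01 h12 h23 n02 n13 h34.symm

lemma tdist4 (hT : T.IsTree) {x0 x1 x2 x3 x4 : V} (h01 : T.Adj x0 x1) (h12 : T.Adj x1 x2)
    (h23 : T.Adj x2 x3) (h34 : T.Adj x3 x4) (n02 : x0 ≠ x2) (n13 : x1 ≠ x3)
    (n24 : x2 ≠ x4) : T.dist x0 x4 = 4 := by
  have n03 := tne03 hT h01 h12 h23 n02 n13
  have n14 := tne03 hT h12 h23 h34 n13 n24
  have n04 := tne04 hT h01 h12 h23 h34 n02 n13 n24
  have := tree_walk_length hT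
    (Walk.cons h01 (Walk.cons h12 (Walk.cons h23 (Walk.cons h34 Walk.nil)))) ?_
  · simpa using this
  · simp [Walk.isPath_def, h01.ne, h12.ne, h23.ne, h34.ne, n02, n13, n24, n03, n14, n04]

lemma tnadj4 (hT : T.IsTree) {x0 x1 x2 x3 x4 : V} (h01 : T.Adj x0 x1) (h12 : T.Adj x1 x2)
    (h23 : T.Adj x2 x3) (h34 : T.Adj x3 x4) (n02 : x0 ≠ x2) (n13 : x1 ≠ x3)
    (n24 : x2 ≠ x4) : ¬ T.Adj x0 x4 := by
  intro h
  have h1 : T.dist x0 x4 = 1 := SimpleGraph.dist_eq_one_iff_adj.mpr h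
  have h2 := tdist4 hT h01 h12 h23 h34 n02 n13 n24
  omega

lemma tne05 (hT : T.IsTree) {x0 x1 x2 x3 x4 x5 : V} (h01 : T.Adj x0 x1) (h12 : T.Adj x1 x2)
    (h23 : T.Adj x2 x3) (h34 : T.Adj x3 x4) (h45 : T.Adj x4 x5) (n02 : x0 ≠ x2)
    (n13 : x1 ≠ x3) (n24 : x2 ≠ x4) (n35 : x3 ≠ x5) : x0 ≠ x5 := by
  rintro rfl
  exact tnadj4 hT h01 h12 h23 h34 n02 n13 n24 h45.symm

lemma dle2 {x0 x1 x2 : V} (h01 : T.Adj x0 x1) (h12 : T.Adj x1 x2) : T.dist x0 x2 ≤ 2 := by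
  have := SimpleGraph.dist_le (Walk.cons h01 (Walk.cons h12 Walk.nil))
  simpa using this

lemma dle3 {x0 x1 x2 x3 : V} (h01 : T.Adj x0 x1) (h12 : T.Adj x1 x2) (h23 : T.Adj x2 x3) :
    T.dist x0 x3 ≤ 3 := by
  have := SimpleGraph.dist_le (Walk.cons h01 (Walk.cons h12 (Walk.cons h23 Walk.nil)))
  simpa using this

lemma clash1 {u v a b d : V} (huv : u ≠ v) (h1 : s(a, b) = s(u, v)) (h2 : s(b, d) = s(u, v))
    (had : a ≠ d) : False := by
  rw [Sym2.eq_iff] at h1 h2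
  rcases h1 with ⟨rfl, rfl⟩ | ⟨rfl, rfl⟩ <;> rcases h2 with ⟨h3, h4⟩ | ⟨h3, h4⟩ <;> simp_all

lemma clash2 {u v a b c d : V} (huv : u ≠ v) (h1 : s(a, b) = s(u, v)) (h2 : s(c, d) = s(u, v))
    (hac : a ≠ c) (had : a ≠ d) (hbc : b ≠ c) (hbd : b ≠ d) : False := by
  rw [Sym2.eq_iff] at h1 h2
  rcases h1 with ⟨rfl, rfl⟩ | ⟨rfl, rfl⟩ <;> rcases h2 with ⟨h3, h4⟩ | ⟨h3, h4⟩ <;> simp_all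

lemma mkCon5 {x0 x1 x2 x3 x4 : V} (H : SimpleGraph (Fin 5))
    (hne : x0 ≠ x1 ∧ x0 ≠ x2 ∧ x0 ≠ x3 ∧ x0 ≠ x4 ∧ x1 ≠ x2 ∧ x1 ≠ x3 ∧ x1 ≠ x4 ∧
      x2 ≠ x3 ∧ x2 ≠ x4 ∧ x3 ≠ x4)
    (hadj : ∀ a b : Fin 5, H.Adj a b →
      T.Adj (![x0, x1, x2, x3, x4] a) (![x0, x1, x2, x3, x4] b)) :
    Contains T H := by
  obtain ⟨n01, n02, n03, n04, n12, n13, n14, n23, n24, n34⟩ := hne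
  refine ⟨⟨![x0, x1, x2, x3, x4], ?_⟩, hadj⟩
  clear hadj
  intro i j hij
  fin_cases i <;> fin_cases j <;> simp only [Matrix.cons_val', Matrix.cons_val_zero,
    Matrix.cons_val_one, Matrix.head_cons, Matrix.head_fin_const, Matrix.cons_val_fin_one,
    Fin.isValue, Matrix.cons_val_two, Matrix.tail_cons, Matrix.cons_val_three,
    Matrix.cons_val_four, Matrix.cons_val_succ] at hij <;>
    first | rfl | exact absurd hij (by assumption) | exact absurd hij.symm (by assumption)

lemma mkCon6 {x0 x1 x2 x3 x4 x5 : V} (H : SimpleGraph (Fin 6))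
    (hne : x0 ≠ x1 ∧ x0 ≠ x2 ∧ x0 ≠ x3 ∧ x0 ≠ x4 ∧ x0 ≠ x5 ∧ x1 ≠ x2 ∧ x1 ≠ x3 ∧ x1 ≠ x4 ∧
      x1 ≠ x5 ∧ x2 ≠ x3 ∧ x2 ≠ x4 ∧ x2 ≠ x5 ∧ x3 ≠ x4 ∧ x3 ≠ x5 ∧ x4 ≠ x5)
    (hadj : ∀ a b : Fin 6, H.Adj a b →
      T.Adj (![x0, x1, x2, x3, x4, x5] a) (![x0, x1, x2, x3, x4, x5] b)) :
    Contains T H := by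
  obtain ⟨n01, n02, n03, n04, n05, n12, n13, n14, n15, n23, n24, n25, n34, n35, n45⟩ := hne
  refine ⟨⟨![x0, x1, x2, x3, x4, x5], ?_⟩, hadj⟩
  clear hadj
  intro i j hij
  fin_cases i <;> fin_cases j <;> simp only [Matrix.cons_val', Matrix.cons_val_zero,
    Matrix.cons_val_one, Matrix.head_cons, Matrix.head_fin_const, Matrix.cons_val_fin_one,
    Fin.isValue, Matrix.cons_val_two, Matrix.tail_cons, Matrix.cons_val_three,
    Matrix.cons_val_four, Matrix.cons_val_succ] at hij <;>
    first | rfl | exact absurd hij (by assumption) | exact absurd hij.symm (by assumption)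

lemma mkPath5 (hT : T.IsTree) {x0 x1 x2 x3 x4 : V} (h01 : T.Adj x0 x1) (h12 : T.Adj x1 x2)
    (h23 : T.Adj x2 x3) (h34 : T.Adj x3 x4) (n02 : x0 ≠ x2) (n13 : x1 ≠ x3)
    (n24 : x2 ≠ x4) : Contains T (SimpleGraph.pathGraph 5) := by
  have n03 := tne03 hT h01 h12 h23 n02 n13
  have n14 := tne03 hT h12 h23 h34 n13 n24
  have n04 := tne04 hT h01 h12 h23 h34 n02 n13 n24
  have g10 := h01.symm; have g21 := h12.symm; have g32 := h23.symm; have g43 := h34.symm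
  refine mkCon5 (SimpleGraph.pathGraph 5)
    ⟨h01.ne, n02, n03, n04, h12.ne, n13, n14, h23.ne, n24, h34.ne⟩ ?_
  intro a b hab
  rw [pathGraph_adj] at hab
  fin_cases a <;> fin_cases b <;> simp_all

lemma mkPath6 (hT : T.IsTree) {x0 x1 x2 x3 x4 x5 : V} (h01 : T.Adj x0 x1) (h12 : T.Adj x1 x2)
    (h23 : T.Adj x2 x3) (h34 : T.Adj x3 x4) (h45 : T.Adj x4 x5) (n02 : x0 ≠ x2)
    (n13 : x1 ≠ x3) (n24 : x2 ≠ x4) (n35 : x3 ≠ x5) :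
    Contains T (SimpleGraph.pathGraph 6) := by
  have n03 := tne03 hT h01 h12 h23 n02 n13
  have n14 := tne03 hT h12 h23 h34 n13 n24
  have n25 := tne03 hT h23 h34 h45 n24 n35
  have n04 := tne04 hT h01 h12 h23 h34 n02 n13 n24
  have n15 := tne04 hT h12 h23 h34 h45 n13 n24 n35
  have n05 := tne05 hT h01 h12 h23 h34 h45 n02 n13 n24 n35
  have g10 := h01.symm; have g21 := h12.symm; have g32 := h23.symm; have g43 := h34.symm
  have g54 := h45.symm
  refine mkCon6 (SimpleGraph.pathGraph 6)
    ⟨h01.ne, n02, n03, n04, n05, h12.ne, n13, n14, n15, h23.ne, n24, n25, h34.ne, n35,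
      h45.ne⟩ ?_
  intro a b hab
  rw [pathGraph_adj] at hab
  fin_cases a <;> fin_cases b <;> simp_all <;> first | exact h45 | exact g54

lemma mkT1 (hT : T.IsTree) {p1 p2 p3 p4 l : V} (h12 : T.Adj p1 p2) (h23 : T.Adj p2 p3)
    (h34 : T.Adj p3 p4) (hl : T.Adj p2 l) (n13 : p1 ≠ p3) (n24 : p2 ≠ p4)
    (nl1 : l ≠ p1) (nl3 : l ≠ p3) : Contains T T1 := by
  have n14 : p1 ≠ p4 := tne03 hT h12 h23 h34 n13 n24
  have nl4 : l ≠ p4 := by rintro rfl; exact tnadj2 hT h23 h34 n24 hl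
  have g1 := h12.symm; have g2 := h23.symm; have g3 := h34.symm; have g4 := hl.symm
  refine mkCon5 T1 ⟨h12.ne, n13, n14, fun h => nl1 h.symm, h23.ne, n24, hl.ne,
    h34.ne, fun h => nl3 h.symm, fun h => nl4 h.symm⟩ ?_
  intro a b hab
  fin_cases a <;> fin_cases b <;> simp_all [T1]

lemma mkT2 (hT : T.IsTree) {c0 c1 a b x y : V} (hcc : T.Adj c0 c1) (hca : T.Adj c0 a)
    (hcb : T.Adj c0 b) (hcx : T.Adj c1 x) (hcy : T.Adj c1 y) (nab : a ≠ b) (nxy : x ≠ y)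
    (na1 : a ≠ c1) (nb1 : b ≠ c1) (nx0 : x ≠ c0) (ny0 : y ≠ c0) : Contains T T2 := by
  have hax : a ≠ x := by
    rintro rfl; exact tnadj2 hT hcc.symm hca (fun h => na1 h.symm) hcx
  have hay : a ≠ y := by
    rintro rfl; exact tnadj2 hT hcc.symm hca (fun h => na1 h.symm) hcy
  have hbx : b ≠ x := by
    rintro rfl; exact tnadj2 hT hcc.symm hcb (fun h => nb1 h.symm) hcx
  have hby : b ≠ y := by
    rintro rfl; exact tnadj2 hT hcc.symm hcb (fun h => nb1 h.symm) hcy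
  have g1 := hcc.symm; have g2 := hca.symm; have g3 := hcb.symm; have g4 := hcx.symm
  have g5 := hcy.symm
  refine mkCon6 T2 ⟨hcc.ne, hca.ne, hcb.ne, fun h => nx0 h.symm, fun h => ny0 h.symm,
    fun h => na1 h.symm, fun h => nb1 h.symm, hcx.ne, hcy.ne, nab, hax, hay, hbx, hby,
    nxy⟩ ?_
  intro i j hij
  fin_cases i <;> fin_cases j <;> simp_all [T2] <;> first | exact hcy | exact g5

lemma mkT3 (hT : T.IsTree) {p1 p2 p3 p4 p5 l : V} (h12 : T.Adj p1 p2) (h23 : T.Adj p2 p3)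
    (h34 : T.Adj p3 p4) (h45 : T.Adj p4 p5) (hl : T.Adj p3 l) (n13 : p1 ≠ p3)
    (n24 : p2 ≠ p4) (n35 : p3 ≠ p5) (nl2 : l ≠ p2) (nl4 : l ≠ p4) : Contains T T3 := by
  have n14 := tne03 hT h12 h23 h34 n13 n24
  have n25 := tne03 hT h23 h34 h45 n24 n35
  have n15 := tne04 hT h12 h23 h34 h45 n13 n24 n35
  have nl1 : l ≠ p1 := by rintro rfl; exact tnadj2 hT h12 h23 n13 hl.symm
  have nl5 : l ≠ p5 := by rintro rfl; exact tnadj2 hT h34 h45 n35 hl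
  have g1 := h12.symm; have g2 := h23.symm; have g3 := h34.symm; have g4 := h45.symm
  have g5 := hl.symm
  refine mkCon6 T3 ⟨h12.ne, n13, n14, n15, fun h => nl1 h.symm, h23.ne, n24, n25,
    fun h => nl2 h.symm, h34.ne, n35, hl.ne, h45.ne, fun h => nl4 h.symm,
    fun h => nl5 h.symm⟩ ?_
  intro i j hij
  fin_cases i <;> fin_cases j <;> simp_all [T3] <;> first | exact hl | exact g5

lemma k3_extract (hfree : ¬ Contains T K3) {u v : V} (huv : u ≠ v)
    (h : Contains (addE T u v) K3) : ∃ w, T.Adj u w ∧ T.Adj v w := by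
  obtain ⟨f, hf⟩ := h
  have a01 := addE_adj.mp (hf 0 1 (by simp [K3]))
  have a02 := addE_adj.mp (hf 0 2 (by simp [K3]))
  have a12 := addE_adj.mp (hf 1 2 (by simp [K3]))
  have nn : ∀ i j : Fin 3, i ≠ j → f i ≠ f j := fun i j hij h => hij (f.injective h)
  have n01 := nn 0 1 (by decide); have n02 := nn 0 2 (by decide)
  have n12 := nn 1 2 (by decide)
  rcases a01 with t01 | ⟨e01, -⟩ <;> rcases a02 with t02 | ⟨e02, -⟩ <;>
    rcases a12 with t12 | ⟨e12, -⟩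
  · refine absurd ⟨f, ?_⟩ hfree
    have g1 := t01.symm; have g2 := t02.symm; have g3 := t12.symm
    intro a b hab
    fin_cases a <;> fin_cases b <;> simp_all [K3]
  · rw [Sym2.eq_iff] at e12
    rcases e12 with ⟨h1, h2⟩ | ⟨h1, h2⟩
    · exact ⟨f 0, (h1 ▸ t01).symm, (h2 ▸ t02).symm⟩
    · exact ⟨f 0, (h2 ▸ t02).symm, (h1 ▸ t01).symm⟩
  · rw [Sym2.eq_iff] at e02
    rcases e02 with ⟨h1, h2⟩ | ⟨h1, h2⟩
    · exact ⟨f 1, h1 ▸ t01, h2 ▸ t12.symm⟩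
    · exact ⟨f 1, h2 ▸ t12.symm, h1 ▸ t01⟩
  · have e12' : s(f 2, f 1) = s(u, v) := by rw [Sym2.eq_swap]; exact e12
    exact (clash1 huv e02 e12' n01).elim
  · rw [Sym2.eq_iff] at e01
    rcases e01 with ⟨h1, h2⟩ | ⟨h1, h2⟩
    · exact ⟨f 2, h1 ▸ t02, h2 ▸ t12⟩
    · exact ⟨f 2, h2 ▸ t12, h1 ▸ t02⟩
  · exact (clash1 huv e01 e12 n02).elim
  · have e01' : s(f 1, f 0) = s(u, v) := by rw [Sym2.eq_swap]; exact e01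
    exact (clash1 huv e01' e02 n12).elim
  · exact (clash1 huv e01 e12 n02).elim

lemma p5_extract (hT : T.IsTree) (hfree : ¬ Contains T (SimpleGraph.pathGraph 5))
    {u v : V} (huv : u ≠ v) (h : Contains (addE T u v) (SimpleGraph.pathGraph 5)) :
    ∃ y0 y1 y2 y3 y4 : V,
      (y0 ≠ y1 ∧ y0 ≠ y2 ∧ y0 ≠ y3 ∧ y0 ≠ y4 ∧ y1 ≠ y2 ∧ y1 ≠ y3 ∧ y1 ≠ y4 ∧
        y2 ≠ y3 ∧ y2 ≠ y4 ∧ y3 ≠ y4) ∧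
      ((y0 = u ∧ y1 = v ∧ T.Adj y1 y2 ∧ T.Adj y2 y3 ∧ T.Adj y3 y4) ∨
       (T.Adj y0 y1 ∧ y1 = u ∧ y2 = v ∧ T.Adj y2 y3 ∧ T.Adj y3 y4) ∨
       (T.Adj y0 y1 ∧ T.Adj y1 y2 ∧ y2 = u ∧ y3 = v ∧ T.Adj y3 y4) ∨
       (T.Adj y0 y1 ∧ T.Adj y1 y2 ∧ T.Adj y2 y3 ∧ y3 = u ∧ y4 = v)) := by
  obtain ⟨f, hf⟩ := h
  have a01 := addE_adj.mp (hf 0 1 (by rw [pathGraph_adj]; left; rfl))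
  have a12 := addE_adj.mp (hf 1 2 (by rw [pathGraph_adj]; left; rfl))
  have a23 := addE_adj.mp (hf 2 3 (by rw [pathGraph_adj]; left; rfl))
  have a34 := addE_adj.mp (hf 3 4 (by rw [pathGraph_adj]; left; rfl))
  have nn : ∀ i j : Fin 5, i ≠ j → f i ≠ f j := fun i j hij h => hij (f.injective h)
  have n01 := nn 0 1 (by decide); have n02 := nn 0 2 (by decide)
  have n03 := nn 0 3 (by decide); have n04 := nn 0 4 (by decide)
  have n12 := nn 1 2 (by decide); have n13 := nn 1 3 (by decide)
  have n14 := nn 1 4 (by decide); have n23 := nn 2 3 (by decide)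
  have n24 := nn 2 4 (by decide); have n34 := nn 3 4 (by decide)
  rcases a01 with t01 | ⟨e01, -⟩ <;> rcases a12 with t12 | ⟨e12, -⟩ <;>
    rcases a23 with t23 | ⟨e23, -⟩ <;> rcases a34 with t34 | ⟨e34, -⟩
  all_goals try exact absurd (mkPath5 hT t01 t12 t23 t34 n02 n13 n24) hfree
  all_goals try exact (clash1 huv e01 e12 n02).elim
  all_goals try exact (clash1 huv e12 e23 n13).elim
  all_goals try exact (clash1 huv e23 e34 n24).elim
  all_goals try exact (clash2 huv e01 e23 n02 n03 n12 n13).elim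
  all_goals try exact (clash2 huv e01 e34 n03 n04 n13 n14).elim
  all_goals try exact (clash2 huv e12 e34 n13 n14 n23 n24).elim
  · rw [Sym2.eq_iff] at e34
    rcases e34 with ⟨h1, h2⟩ | ⟨h1, h2⟩
    · exact ⟨f 0, f 1, f 2, f 3, f 4,
        ⟨n01, n02, n03, n04, n12, n13, n14, n23, n24, n34⟩,
        Or.inr (Or.inr (Or.inr ⟨t01, t12, t23, h1, h2⟩))⟩
    · exact ⟨f 4, f 3, f 2, f 1, f 0,
        ⟨n34.symm, n24.symm, n14.symm, n04.symm, n23.symm, n13.symm, n03.symm, n12.symm,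
          n02.symm, n01.symm⟩,
        Or.inl ⟨h2, h1, t23.symm, t12.symm, t01.symm⟩⟩
  · rw [Sym2.eq_iff] at e23
    rcases e23 with ⟨h1, h2⟩ | ⟨h1, h2⟩
    · exact ⟨f 0, f 1, f 2, f 3, f 4,
        ⟨n01, n02, n03, n04, n12, n13, n14, n23, n24, n34⟩,
        Or.inr (Or.inr (Or.inl ⟨t01, t12, h1, h2, t34⟩))⟩
    · exact ⟨f 4, f 3, f 2, f 1, f 0,
        ⟨n34.symm, n24.symm, n14.symm, n04.symm, n23.symm, n13.symm, n03.symm, n12.symm,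
          n02.symm, n01.symm⟩,
        Or.inr (Or.inl ⟨t34.symm, h2, h1, t12.symm, t01.symm⟩)⟩
  · rw [Sym2.eq_iff] at e12
    rcases e12 with ⟨h1, h2⟩ | ⟨h1, h2⟩
    · exact ⟨f 0, f 1, f 2, f 3, f 4,
        ⟨n01, n02, n03, n04, n12, n13, n14, n23, n24, n34⟩,
        Or.inr (Or.inl ⟨t01, h1, h2, t23, t34⟩)⟩
    · exact ⟨f 4, f 3, f 2, f 1, f 0,
        ⟨n34.symm, n24.symm, n14.symm, n04.symm, n23.symm, n13.symm, n03.symm, n12.symm,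
          n02.symm, n01.symm⟩,
        Or.inr (Or.inr (Or.inl ⟨t34.symm, t23.symm, h2, h1, t01.symm⟩))⟩
  · rw [Sym2.eq_iff] at e01
    rcases e01 with ⟨h1, h2⟩ | ⟨h1, h2⟩
    · exact ⟨f 0, f 1, f 2, f 3, f 4,
        ⟨n01, n02, n03, n04, n12, n13, n14, n23, n24, n34⟩,
        Or.inl ⟨h1, h2, t12, t23, t34⟩⟩
    · exact ⟨f 4, f 3, f 2, f 1, f 0,
        ⟨n34.symm, n24.symm, n14.symm, n04.symm, n23.symm, n13.symm, n03.symm, n12.symm,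
          n02.symm, n01.symm⟩,
        Or.inr (Or.inr (Or.inr ⟨t34.symm, t23.symm, t12.symm, h2, h1⟩))⟩

lemma p6_extract (hT : T.IsTree) (hfree : ¬ Contains T (SimpleGraph.pathGraph 6))
    {u v : V} (huv : u ≠ v) (h : Contains (addE T u v) (SimpleGraph.pathGraph 6)) :
    ∃ y0 y1 y2 y3 y4 y5 : V,
      (y0 ≠ y1 ∧ y0 ≠ y2 ∧ y0 ≠ y3 ∧ y0 ≠ y4 ∧ y0 ≠ y5 ∧ y1 ≠ y2 ∧ y1 ≠ y3 ∧ y1 ≠ y4 ∧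
        y1 ≠ y5 ∧ y2 ≠ y3 ∧ y2 ≠ y4 ∧ y2 ≠ y5 ∧ y3 ≠ y4 ∧ y3 ≠ y5 ∧ y4 ≠ y5) ∧
      ((y0 = u ∧ y1 = v ∧ T.Adj y1 y2 ∧ T.Adj y2 y3 ∧ T.Adj y3 y4 ∧ T.Adj y4 y5) ∨
       (T.Adj y0 y1 ∧ y1 = u ∧ y2 = v ∧ T.Adj y2 y3 ∧ T.Adj y3 y4 ∧ T.Adj y4 y5) ∨
       (T.Adj y0 y1 ∧ T.Adj y1 y2 ∧ y2 = u ∧ y3 = v ∧ T.Adj y3 y4 ∧ T.Adj y4 y5) ∨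
       (T.Adj y0 y1 ∧ T.Adj y1 y2 ∧ T.Adj y2 y3 ∧ y3 = u ∧ y4 = v ∧ T.Adj y4 y5) ∨
       (T.Adj y0 y1 ∧ T.Adj y1 y2 ∧ T.Adj y2 y3 ∧ T.Adj y3 y4 ∧ y4 = u ∧ y5 = v)) := by
  obtain ⟨f, hf⟩ := h
  have a01 := addE_adj.mp (hf 0 1 (by rw [pathGraph_adj]; left; rfl))
  have a12 := addE_adj.mp (hf 1 2 (by rw [pathGraph_adj]; left; rfl))
  have a23 := addE_adj.mp (hf 2 3 (by rw [pathGraph_adj]; left; rfl))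
  have a34 := addE_adj.mp (hf 3 4 (by rw [pathGraph_adj]; left; rfl))
  have a45 := addE_adj.mp (hf 4 5 (by rw [pathGraph_adj]; left; rfl))
  have nn : ∀ i j : Fin 6, i ≠ j → f i ≠ f j := fun i j hij h => hij (f.injective h)
  have n01 := nn 0 1 (by decide); have n02 := nn 0 2 (by decide)
  have n03 := nn 0 3 (by decide); have n04 := nn 0 4 (by decide)
  have n05 := nn 0 5 (by decide); have n12 := nn 1 2 (by decide)
  have n13 := nn 1 3 (by decide); have n14 := nn 1 4 (by decide)
  have n15 := nn 1 5 (by decide); have n23 := nn 2 3 (by decide)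
  have n24 := nn 2 4 (by decide); have n25 := nn 2 5 (by decide)
  have n34 := nn 3 4 (by decide); have n35 := nn 3 5 (by decide)
  have n45 := nn 4 5 (by decide)
  rcases a01 with t01 | ⟨e01, -⟩ <;> rcases a12 with t12 | ⟨e12, -⟩ <;>
    rcases a23 with t23 | ⟨e23, -⟩ <;> rcases a34 with t34 | ⟨e34, -⟩ <;>
    rcases a45 with t45 | ⟨e45, -⟩
  all_goals try exact absurd (mkPath6 hT t01 t12 t23 t34 t45 n02 n13 n24 n35) hfree
  all_goals try exact (clash1 huv e01 e12 n02).elim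
  all_goals try exact (clash1 huv e12 e23 n13).elim
  all_goals try exact (clash1 huv e23 e34 n24).elim
  all_goals try exact (clash1 huv e34 e45 n35).elim
  all_goals try exact (clash2 huv e01 e23 n02 n03 n12 n13).elim
  all_goals try exact (clash2 huv e01 e34 n03 n04 n13 n14).elim
  all_goals try exact (clash2 huv e01 e45 n04 n05 n14 n15).elim
  all_goals try exact (clash2 huv e12 e34 n13 n14 n23 n24).elim
  all_goals try exact (clash2 huv e12 e45 n14 n15 n24 n25).elim
  all_goals try exact (clash2 huv e23 e45 n24 n25 n34 n35).elim
  · rw [Sym2.eq_iff] at e45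
    rcases e45 with ⟨h1, h2⟩ | ⟨h1, h2⟩
    · exact ⟨f 0, f 1, f 2, f 3, f 4, f 5,
        ⟨n01, n02, n03, n04, n05, n12, n13, n14, n15, n23, n24, n25, n34, n35, n45⟩,
        Or.inr (Or.inr (Or.inr (Or.inr ⟨t01, t12, t23, t34, h1, h2⟩)))⟩
    · exact ⟨f 5, f 4, f 3, f 2, f 1, f 0,
        ⟨n45.symm, n35.symm, n25.symm, n15.symm, n05.symm, n34.symm, n24.symm, n14.symm,
          n04.symm, n23.symm, n13.symm, n03.symm, n12.symm, n02.symm, n01.symm⟩,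
        Or.inl ⟨h2, h1, t34.symm, t23.symm, t12.symm, t01.symm⟩⟩
  · rw [Sym2.eq_iff] at e34
    rcases e34 with ⟨h1, h2⟩ | ⟨h1, h2⟩
    · exact ⟨f 0, f 1, f 2, f 3, f 4, f 5,
        ⟨n01, n02, n03, n04, n05, n12, n13, n14, n15, n23, n24, n25, n34, n35, n45⟩,
        Or.inr (Or.inr (Or.inr (Or.inl ⟨t01, t12, t23, h1, h2, t45⟩)))⟩
    · exact ⟨f 5, f 4, f 3, f 2, f 1, f 0,
        ⟨n45.symm, n35.symm, n25.symm, n15.symm, n05.symm, n34.symm, n24.symm, n14.symm,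
          n04.symm, n23.symm, n13.symm, n03.symm, n12.symm, n02.symm, n01.symm⟩,
        Or.inr (Or.inl ⟨t45.symm, h2, h1, t23.symm, t12.symm, t01.symm⟩)⟩
  · rw [Sym2.eq_iff] at e23
    rcases e23 with ⟨h1, h2⟩ | ⟨h1, h2⟩
    · exact ⟨f 0, f 1, f 2, f 3, f 4, f 5,
        ⟨n01, n02, n03, n04, n05, n12, n13, n14, n15, n23, n24, n25, n34, n35, n45⟩,
        Or.inr (Or.inr (Or.inl ⟨t01, t12, h1, h2, t34, t45⟩))⟩
    · exact ⟨f 5, f 4, f 3, f 2, f 1, f 0,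
        ⟨n45.symm, n35.symm, n25.symm, n15.symm, n05.symm, n34.symm, n24.symm, n14.symm,
          n04.symm, n23.symm, n13.symm, n03.symm, n12.symm, n02.symm, n01.symm⟩,
        Or.inr (Or.inr (Or.inl ⟨t45.symm, t34.symm, h2, h1, t12.symm, t01.symm⟩))⟩
  · rw [Sym2.eq_iff] at e12
    rcases e12 with ⟨h1, h2⟩ | ⟨h1, h2⟩
    · exact ⟨f 0, f 1, f 2, f 3, f 4, f 5,
        ⟨n01, n02, n03, n04, n05, n12, n13, n14, n15, n23, n24, n25, n34, n35, n45⟩,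
        Or.inr (Or.inl ⟨t01, h1, h2, t23, t34, t45⟩)⟩
    · exact ⟨f 5, f 4, f 3, f 2, f 1, f 0,
        ⟨n45.symm, n35.symm, n25.symm, n15.symm, n05.symm, n34.symm, n24.symm, n14.symm,
          n04.symm, n23.symm, n13.symm, n03.symm, n12.symm, n02.symm, n01.symm⟩,
        Or.inr (Or.inr (Or.inr (Or.inl ⟨t45.symm, t34.symm, t23.symm, h2, h1, t01.symm⟩)))⟩
  · rw [Sym2.eq_iff] at e01
    rcases e01 with ⟨h1, h2⟩ | ⟨h1, h2⟩
    · exact ⟨f 0, f 1, f 2, f 3, f 4, f 5,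
        ⟨n01, n02, n03, n04, n05, n12, n13, n14, n15, n23, n24, n25, n34, n35, n45⟩,
        Or.inl ⟨h1, h2, t12, t23, t34, t45⟩⟩
    · exact ⟨f 5, f 4, f 3, f 2, f 1, f 0,
        ⟨n45.symm, n35.symm, n25.symm, n15.symm, n05.symm, n34.symm, n24.symm, n14.symm,
          n04.symm, n23.symm, n13.symm, n03.symm, n12.symm, n02.symm, n01.symm⟩,
        Or.inr (Or.inr (Or.inr (Or.inr ⟨t45.symm, t34.symm, t23.symm, t12.symm, h2, h1⟩)))⟩

lemma leaf_case (hT : T.IsTree)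
    (hno : ∀ a b c d : V, T.Adj a b → T.Adj b c → T.Adj c d → a ≠ c → b = d)
    (hstar' : ∀ w : V, ∃ a b, T.Adj a b ∧ a ≠ w ∧ b ≠ w)
    {p q : V} (hpq : T.Adj p q) (hleaf : ∀ x, T.Adj p x → x = q) : False := by
  obtain ⟨a, b, hab, ha, hb⟩ := hstar' q
  have hap : a ≠ p := by rintro rfl; exact hb (hleaf b hab)
  obtain ⟨w, hw, -⟩ := hT.isConnected.exists_path_of_dist p a
  cases w with
  | nil => exact hap rfl
  | cons h1 w =>
    rename_i m
    have hm := hleaf _ h1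
    subst hm
    cases w with
    | nil => exact ha rfl
    | cons h2 w =>
      rename_i z
      cases w with
      | nil => exact hb (hno p m a b hpq h2 hab (fun h => hap h.symm)).symm
      | cons h3 w =>
        rename_i z'
        simp only [Walk.isPath_def, Walk.support_cons, List.nodup_cons] at hw
        have hpz : p ≠ z := by
          intro he
          exact hw.1 (by rw [he]; exact List.mem_cons_of_mem _ List.mem_cons_self)
        have hqz' : m ≠ z' := by
          intro he
          exact hw.2.1 (by rw [he]; exact List.mem_cons_of_mem _ w.start_mem_support)
        exact hqz' (hno p m z z' hpq h2 h3 hpz)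

lemma star_chain (hT : T.IsTree)
    (hstar : ¬ ∃ v : V, ∀ a b, T.Adj a b → a = v ∨ b = v) :
    ∃ a b c d : V, T.Adj a b ∧ T.Adj b c ∧ T.Adj c d ∧ a ≠ c ∧ b ≠ d := by
  by_contra hno
  push_neg at hno hstar
  have hstar' : ∀ w : V, ∃ a b, T.Adj a b ∧ a ≠ w ∧ b ≠ w := by
    intro w
    obtain ⟨a, b, hab, h⟩ := hstar w
    exact ⟨a, b, hab, h.1, h.2⟩
  have hno' : ∀ a b c d : V, T.Adj a b → T.Adj b c → T.Adj c d → a ≠ c → b = d := by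
    intro a b c d h1 h2 h3 h4
    by_contra hbd
    exact hbd (hno a b c d h1 h2 h3 h4)
  obtain ⟨v0⟩ := hT.isConnected.nonempty
  obtain ⟨p, q, hpq, -, -⟩ := hstar' v0
  by_cases hp2 : ∃ x, T.Adj p x ∧ x ≠ q
  · by_cases hq2 : ∃ y, T.Adj q y ∧ y ≠ p
    · obtain ⟨x, hx, hxq⟩ := hp2
      obtain ⟨y, hy, hyp⟩ := hq2
      exact hyp (hno' x p q y hx.symm hpq hy hxq).symm
    · push_neg at hq2
      exact leaf_case hT hno' hstar' hpq.symm hq2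
  · push_neg at hp2
    exact leaf_case hT hno' hstar' hpq hp2

lemma dist_chain3 (hconn : T.Connected) {x y : V} (h : T.dist x y = 3) :
    ∃ a b, T.Adj x a ∧ T.Adj a b ∧ T.Adj b y ∧ x ≠ a ∧ x ≠ b ∧ x ≠ y ∧ a ≠ b ∧ a ≠ y ∧
      b ≠ y := by
  obtain ⟨p, hp, hl⟩ := hconn.exists_path_of_dist x y
  rw [h] at hl
  cases p with
  | nil => simp at hl
  | cons h1 p => cases p with
    | nil => simp at hl
    | cons h2 p => cases p with
      | nil => simp at hl
      | cons h3 p => cases p with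
        | cons h4 p => simp [Walk.length_cons] at hl
        | nil =>
          simp [Walk.isPath_def] at hp
          exact ⟨_, _, h1, h2, h3, by tauto⟩

lemma dist_chain4 (hconn : T.Connected) {x y : V} (h : T.dist x y = 4) :
    ∃ a b c, T.Adj x a ∧ T.Adj a b ∧ T.Adj b c ∧ T.Adj c y ∧ x ≠ a ∧ x ≠ b ∧ x ≠ c ∧
      x ≠ y ∧ a ≠ b ∧ a ≠ c ∧ a ≠ y ∧ b ≠ c ∧ b ≠ y ∧ c ≠ y := by
  obtain ⟨p, hp, hl⟩ := hconn.exists_path_of_dist x y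
  rw [h] at hl
  cases p with
  | nil => simp at hl
  | cons h1 p => cases p with
    | nil => simp at hl
    | cons h2 p => cases p with
      | nil => simp at hl
      | cons h3 p => cases p with
        | nil => simp at hl
        | cons h4 p => cases p with
          | cons h5 p => simp [Walk.length_cons] at hl
          | nil =>
            simp [Walk.isPath_def] at hp
            exact ⟨_, _, _, h1, h2, h3, h4, by tauto⟩


end Helpers

theorem statement_19 {V : Type*} [Fintype V] (T : SimpleGraph V) (hT : T.IsTree)
    (hstar : ¬ ∃ v : V, ∀ a b, T.Adj a b → a = v ∨ b = v) :
    (SatKP T 5 → Contains T T1) ∧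
    (SatKP T 6 →
      (T.diam = 3 → Contains T T2) ∧ (T.diam = 4 → Contains T T3)) := by
  classical
  have hconn := hT.isConnected
  constructor
  · -- k = 5
    rintro ⟨hK3f, hP5f, hadd⟩
    obtain ⟨a, b, c, d, hab, hbc, hcd, nac, nbd⟩ := star_chain hT hstar
    have nad : a ≠ d := tne03 hT hab hbc hcd nac nbd
    have hdist : T.dist a d = 3 := tdist3 hT hab hbc hcd nac nbd
    have hnadj : ¬ T.Adj a d := tnadj3 hT hab hbc hcd nac nbd
    have hP5 : ∀ x0 x1 x2 x3 x4 : V, T.Adj x0 x1 → T.Adj x1 x2 → T.Adj x2 x3 →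
        T.Adj x3 x4 → x0 ≠ x2 → x1 ≠ x3 → x2 ≠ x4 → False := by
      intro x0 x1 x2 x3 x4 h1 h2 h3 h4 m1 m2 m3
      exact hP5f (mkPath5 hT h1 h2 h3 h4 m1 m2 m3)
    rcases hadd a d nad hnadj with h3 | h5
    · obtain ⟨w, hw1, hw2⟩ := k3_extract hK3f nad h3
      have := dle2 hw1 hw2.symm
      omega
    · obtain ⟨y0, y1, y2, y3, y4, ⟨n01, n02, n03, n04, n12, n13, n14, n23, n24, n34⟩, hc⟩ :=
        p5_extract hT hP5f nad h5
      rcases hc with ⟨e0, e1, t12, t23, t34⟩ | ⟨t01, e1, e2, t23, t34⟩ |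
        ⟨t01, t12, e2, e3, t34⟩ | ⟨t01, t12, t23, e3, e4⟩
      · -- y0 = a, y1 = d
        subst e0; subst e1
        by_cases hc2 : y2 = c
        · subst hc2
          by_cases hb3 : y3 = b
          · subst hb3
            exact mkT1 hT hab hbc hcd t34 nac nbd (fun h => n04 h.symm) (fun h => n24 h.symm)
          · exact mkT1 hT hcd.symm hbc.symm hab.symm t23 (fun h => nbd h.symm)
              (fun h => nac h.symm) (fun h => n13 h.symm) hb3
        · exact ((hP5 y4 y3 y2 y1 c t34.symm t23.symm t12.symm hcd.symm
            (fun h => n24 h.symm) (fun h => n13 h.symm) hc2)).elim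
      · -- y1 = a, y2 = d
        subst e1; subst e2
        by_cases hb0 : y0 = b
        · subst hb0
          by_cases hc3 : y3 = c
          · subst hc3
            exact mkT1 hT hcd.symm hbc.symm hab.symm t34 (fun h => nbd h.symm)
              (fun h => nac h.symm) (fun h => n24 h.symm) (fun h => n04 h.symm)
          · exact (hP5 y4 y3 y2 c y0 t34.symm t23.symm hcd.symm hbc.symm
              (fun h => n24 h.symm) hc3 (fun h => nbd h.symm)).elim
        · exact (hP5 y0 y1 b c y2 t01 hab hbc hcd hb0 nac nbd).elim
      · -- y2 = a, y3 = d
        subst e2; subst e3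
        by_cases hb1 : y1 = b
        · subst hb1
          by_cases hc0 : y0 = c
          · subst hc0
            exact (hP5 y4 y3 y0 y1 y2 t34.symm hcd.symm hbc.symm hab.symm
              (fun h => n04 h.symm) (fun h => nbd h.symm) (fun h => nac h.symm)).elim
          · exact mkT1 hT hab hbc hcd t01.symm nac nbd n02 hc0
        · exact (hP5 y0 y1 y2 b c t01 t12 hab hbc n02 hb1 nac).elim
      · -- y3 = a, y4 = d
        subst e3; subst e4
        by_cases hb2 : y2 = b
        · subst hb2
          by_cases hc1 : y1 = c
          · subst hc1
            exact mkT1 hT hcd.symm hbc.symm hab.symm t01.symm (fun h => nbd h.symm)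
              (fun h => nac h.symm) n04 n02
          · exact mkT1 hT hab hbc hcd t12.symm nac nbd n13 hc1
        · exact (hP5 y1 y2 y3 b c t12 t23 hab hbc n13 hb2 nac).elim
  · -- k = 6
    rintro ⟨hK3f, hP6f, hadd⟩
    have hP6 : ∀ x0 x1 x2 x3 x4 x5 : V, T.Adj x0 x1 → T.Adj x1 x2 → T.Adj x2 x3 →
        T.Adj x3 x4 → T.Adj x4 x5 → x0 ≠ x2 → x1 ≠ x3 → x2 ≠ x4 → x3 ≠ x5 → False := by
      intro x0 x1 x2 x3 x4 x5 h1 h2 h3 h4 h5 m1 m2 m3 m4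
      exact hP6f (mkPath6 hT h1 h2 h3 h4 h5 m1 m2 m3 m4)
    have hV : Nonempty V := hconn.nonempty
    constructor
    · -- diam = 3
      intro hdiam
      have hnz : T.diam ≠ 0 := by rw [hdiam]; omega
      have hbound : ∀ x y : V, T.dist x y ≤ 3 := by
        intro x y
        have h : T.dist x y ≤ T.diam := dist_le_diam (ediam_ne_top_of_diam_ne_zero hnz)
        rw [hdiam] at h
        exact h
      obtain ⟨a, d, hd⟩ := exists_dist_eq_diam (G := T)
      rw [hdiam] at hd
      obtain ⟨b, c, hab, hbc, hcd, nab, nac, nad, nbc, nbd, ncd⟩ := dist_chain3 hconn hd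
      have hP5 : ∀ x0 x1 x2 x3 x4 : V, T.Adj x0 x1 → T.Adj x1 x2 → T.Adj x2 x3 →
          T.Adj x3 x4 → x0 ≠ x2 → x1 ≠ x3 → x2 ≠ x4 → False := by
        intro x0 x1 x2 x3 x4 h1 h2 h3 h4 m1 m2 m3
        have hd4 := tdist4 hT h1 h2 h3 h4 m1 m2 m3
        have := hbound x0 x4
        omega
      have hnadj : ¬ T.Adj a d := by
        intro h
        have := SimpleGraph.dist_eq_one_iff_adj.mpr h
        omega
      rcases hadd a d nad hnadj with h3 | h6
      · obtain ⟨w, hw1, hw2⟩ := k3_extract hK3f nad h3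
        have := dle2 hw1 hw2.symm
        omega
      · obtain ⟨y0, y1, y2, y3, y4, y5,
          ⟨n01, n02, n03, n04, n05, n12, n13, n14, n15, n23, n24, n25, n34, n35, n45⟩, hc⟩ :=
          p6_extract hT hP6f nad h6
        rcases hc with ⟨e0, e1, t12, t23, t34, t45⟩ | ⟨t01, e1, e2, t23, t34, t45⟩ |
          ⟨t01, t12, e2, e3, t34, t45⟩ | ⟨t01, t12, t23, e3, e4, t45⟩ |
          ⟨t01, t12, t23, t34, e4, e5⟩
        · subst e0; subst e1
          exact (hP5 y1 y2 y3 y4 y5 t12 t23 t34 t45 n13 n24 n35).elim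
        · subst e1; subst e2
          by_cases h3c : y3 = c
          · subst h3c
            by_cases h4b : y4 = b
            · subst h4b
              exact (hP5 y0 y1 y4 y3 y2 t01 hab hbc hcd n04 nac nbd).elim
            · exact (hP5 y5 y4 y3 b y1 t45.symm t34.symm hbc.symm hab.symm
                (fun h => n35 h.symm) h4b (fun h => nac h.symm)).elim
          · exact (hP5 y5 y4 y3 y2 c t45.symm t34.symm t23.symm hcd.symm
              (fun h => n35 h.symm) (fun h => n24 h.symm) h3c).elim
        · subst e2; subst e3
          by_cases h1b : y1 = b
          · subst h1b
            by_cases h4c : y4 = c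
            · subst h4c
              exact mkT2 hT hbc hab.symm t01.symm hcd t45 (fun h => n02 h.symm) n35
                n24 n04 (fun h => n13 h.symm) (fun h => n15 h.symm)
            · exact (hP5 y5 y4 y3 c y1 t45.symm t34.symm hcd.symm hbc.symm
                (fun h => n35 h.symm) h4c (fun h => nbd h.symm)).elim
          · exact (hP5 y0 y1 y2 b c t01 t12 hab hbc n02 h1b nac).elim
        · subst e3; subst e4
          by_cases h2b : y2 = b
          · subst h2b
            by_cases h1c : y1 = c
            · subst h1c
              exact (hP5 y5 y4 y1 y2 y3 t45.symm hcd.symm hbc.symm hab.symm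
                (fun h => n15 h.symm) (fun h => n24 h.symm) n13).elim
            · exact (hP5 y0 y1 y2 c y4 t01 t12 hbc hcd n02 h1c n24).elim
          · exact (hP5 y0 y1 y2 y3 b t01 t12 t23 hab n02 n13 h2b).elim
        · subst e4; subst e5
          exact (hP5 y0 y1 y2 y3 y4 t01 t12 t23 t34 n02 n13 n24).elim
    · -- diam = 4
      intro hdiam
      have hnz : T.diam ≠ 0 := by rw [hdiam]; omega
      obtain ⟨u0, w0, hd⟩ := exists_dist_eq_diam (G := T)
      rw [hdiam] at hd
      obtain ⟨p, q, r, hup, hpq, hqr, hrw, nup, nuq, nur, nuw, npq, npr, npw, nqr, nqw,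
        nrw⟩ := dist_chain4 hconn hd
      have hnadj : ¬ T.Adj p w0 := by
        intro h
        have := dle2 hup h
        omega
      rcases hadd p w0 npw hnadj with h3 | h6
      · obtain ⟨w, hw1, hw2⟩ := k3_extract hK3f npw h3
        have := dle3 hup hw1 hw2.symm
        omega
      · obtain ⟨y0, y1, y2, y3, y4, y5,
          ⟨n01, n02, n03, n04, n05, n12, n13, n14, n15, n23, n24, n25, n34, n35, n45⟩, hc⟩ :=
          p6_extract hT hP6f npw h6
        rcases hc with ⟨e0, e1, t12, t23, t34, t45⟩ | ⟨t01, e1, e2, t23, t34, t45⟩ |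
          ⟨t01, t12, e2, e3, t34, t45⟩ | ⟨t01, t12, t23, e3, e4, t45⟩ |
          ⟨t01, t12, t23, t34, e4, e5⟩
        · subst e0; subst e1
          by_cases h2r : y2 = r
          · subst h2r
            by_cases h3q : y3 = q
            · subst h3q
              exact mkT3 hT hup hpq hqr hrw t34 nuq npr nqw (fun h => n04 h.symm)
                (fun h => n24 h.symm)
            · exact (hP6 u0 y0 q y2 y3 y4 hup hpq hqr t23 t34 nuq npr (fun h => h3q h.symm) n24).elim
          · exact (hP6 u0 y0 q r y1 y2 hup hpq hqr hrw t12 nuq npr nqw (fun h => h2r h.symm)).elim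
        · subst e1; subst e2
          by_cases h3r : y3 = r
          · subst h3r
            by_cases h4q : y4 = q
            · subst h4q
              exact mkT3 hT hup hpq hqr hrw t45 nuq npr nqw (fun h => n15 h.symm)
                (fun h => n35 h.symm)
            · exact (hP6 u0 y1 q y3 y4 y5 hup hpq hqr t34 t45 nuq npr
                (fun h => h4q h.symm) n35).elim
          · exact (hP6 u0 y1 q r y2 y3 hup hpq hqr hrw t23 nuq npr nqw
              (fun h => h3r h.symm)).elim
        · subst e2; subst e3
          by_cases h4r : y4 = r
          · subst h4r
            by_cases h1q : y1 = q
            · subst h1q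
              exact mkT3 hT hup hpq hqr hrw t01.symm nuq npr nqw n02 n04
            · exact (hP6 y0 y1 y2 q y4 y3 t01 t12 hpq hqr hrw n02 h1q npr nqw).elim
          · exact (hP6 u0 y2 q r y3 y4 hup hpq hqr hrw t34 nuq npr nqw
              (fun h => h4r h.symm)).elim
        · subst e3; subst e4
          by_cases h5r : y5 = r
          · subst h5r
            by_cases h2q : y2 = q
            · subst h2q
              exact mkT3 hT hup hpq hqr hrw t12.symm nuq npr nqw n13 n15
            · exact (hP6 y1 y2 y3 q y5 y4 t12 t23 hpq hqr hrw n13 h2q npr nqw).elim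
          · exact (hP6 u0 y3 q r y4 y5 hup hpq hqr hrw t45 nuq npr nqw
              (fun h => h5r h.symm)).elim
        · subst e4; subst e5
          by_cases h3q : y3 = q
          · subst h3q
            by_cases h2r : y2 = r
            · subst h2r
              exact (hP6 u0 y4 y3 y2 y1 y0 hup hpq hqr t12.symm t01.symm nuq npr
                (fun h => n13 h.symm) (fun h => n02 h.symm)).elim
            · exact mkT3 hT hup hpq hqr hrw t23.symm nuq npr nqw n24 h2r
          · exact (hP6 y2 y3 y4 q r y5 t23 t34 hpq hqr hrw n24 h3q npr nqw).elim
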